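/- arXiv:0905.3346 — 7 statements merged into one kernel-verified Lean document; each statement's English description precedes it below -/
import Mathlib

section
/- Let n be a positive integer with n ≡ 0 (mod 4), let p be a prime with p ≡ 3 (mod 8), and suppose N = p − n² is positive and prime. Then the equation x⁴ + 2n·x²y² − N·y⁴ = z² has no solution in positive integers x, y, z. -/
/-!
With `A = x² + n y²` and `N = p - n²` the equation reads `A² - z² = p y⁴`. Since `N ≡ p ≡ 3`
(mod 8), in a primitive solution `y = 2y₁` is even, and factoring
`((A - z)/2) ((A + z)/2) = 4 p y₁⁴` into coprime parts gives `A = p d⁴ + 4c⁴` or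
`A = d⁴ + 4p c⁴` with `cd = y₁` and `d` odd. The first is impossible mod 8. In the second,
`x² = (d² - 2n c²)² + 4N c⁴`, and factoring `x² - (d² - 2n c²)²` in the same way either
contradicts the equation mod 8 or yields a new solution `(g, f, d)` with `f ≤ c < y`, so the
solutions descend forever.
-/

lemma exists_pos_pow_four_of_mul_eq_pow_four {a b c : ℤ} (ha : 0 < a) (hab : IsCoprime a b)
    (h : a * b = c ^ 4) : ∃ d, 0 < d ∧ a = d ^ 4 := by
  obtain ⟨d, hd⟩ := exists_associated_pow_of_mul_eq_pow' hab h
  rcases Int.associated_iff.mp hd with hd | hd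
  · have hd0 : d ≠ 0 := by rintro rfl; omega
    exact ⟨|d|, abs_pos.mpr hd0, by rw [pow_abs, hd, abs_of_pos ha]⟩
  · linarith [sq_nonneg (d ^ 2)]

lemma exists_pow_four_of_mul_eq_prime_mul_pow_four_of_dvd {u v q c : ℤ} (hq : Prime q)
    (hc : 0 < c) (hv : 0 < v) (huv : IsCoprime u v) (h : u * v = q * c ^ 4) (hqu : q ∣ u) :
    ∃ f g, 0 < f ∧ 0 < g ∧ f * g = c ∧ u = q * f ^ 4 ∧ v = g ^ 4 := by
  obtain ⟨u₁, rfl⟩ := hqu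
  have h₁ : u₁ * v = c ^ 4 := mul_left_cancel₀ hq.ne_zero (by linear_combination h)
  have hu₁ : 0 < u₁ := pos_of_mul_pos_left (h₁ ▸ by positivity) hv.le
  have hu₁v : IsCoprime u₁ v := huv.of_isCoprime_of_dvd_left (dvd_mul_left u₁ q)
  obtain ⟨f, hf, rfl⟩ := exists_pos_pow_four_of_mul_eq_pow_four hu₁ hu₁v h₁
  obtain ⟨g, hg, rfl⟩ :=
    exists_pos_pow_four_of_mul_eq_pow_four hv hu₁v.symm (by rw [mul_comm, h₁])
  refine ⟨f, g, hf, hg, ?_, rfl, rfl⟩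
  exact (pow_left_inj₀ (by positivity) hc.le four_ne_zero).mp (by rw [mul_pow, h₁])

lemma exists_pow_four_of_mul_eq_prime_mul_pow_four {u v q c : ℤ} (hq : Prime q) (hc : 0 < c)
    (hu : 0 < u) (hv : 0 < v) (huv : IsCoprime u v) (h : u * v = q * c ^ 4) :
    ∃ f g, 0 < f ∧ 0 < g ∧ f * g = c ∧
      (u = q * f ^ 4 ∧ v = g ^ 4 ∨ u = f ^ 4 ∧ v = q * g ^ 4) := by
  rcases hq.dvd_mul.mp ⟨c ^ 4, h⟩ with hqu | hqv
  · obtain ⟨f, g, hf, hg, hfg, rfl, rfl⟩ :=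
      exists_pow_four_of_mul_eq_prime_mul_pow_four_of_dvd hq hc hv huv h hqu
    exact ⟨f, g, hf, hg, hfg, Or.inl ⟨rfl, rfl⟩⟩
  · obtain ⟨g, f, hg, hf, hgf, rfl, rfl⟩ :=
      exists_pow_four_of_mul_eq_prime_mul_pow_four_of_dvd hq hc hu huv.symm
        (by rw [mul_comm, h]) hqv
    exact ⟨f, g, hf, hg, by rw [mul_comm, hgf], Or.inr ⟨rfl, rfl⟩⟩

lemma exists_add_sub_eq_of_sq_sub_sq_eq_four_mul {a b k : ℤ} (hab : IsCoprime a b)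
    (h : a ^ 2 - b ^ 2 = 4 * k) : ∃ u v, a = u + v ∧ b = v - u ∧ u * v = k ∧ IsCoprime u v := by
  have hsub : Even (a - b) := by
    rcases Int.even_mul.mp (⟨2 * k, by linear_combination h⟩ : Even ((a - b) * (a + b)))
      with h' | h'
    · exact h'
    · exact Int.even_sub.mpr (Int.even_add.mp h')
  obtain ⟨u, hu⟩ := hsub
  obtain ⟨s, t, hst⟩ := hab
  refine ⟨u, b + u, by linarith, by ring, ?_, s - t, s + t, by linear_combination hst - s * hu⟩
  exact mul_left_cancel₀ four_ne_zero (by linear_combination h - (a + b + 2 * u) * hu)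

lemma isCoprime_of_sq_sub_sq_eq_prime_mul {a b q m : ℤ} (hq : Prime q) (ham : IsCoprime a m)
    (h : a ^ 2 - b ^ 2 = q * m) : IsCoprime a b := by
  have hqam : ¬ (q ∣ a ∧ q ∣ m) := fun ⟨hqa, hqm⟩ => hq.not_isUnit (ham.isUnit_of_dvd' hqa hqm)
  refine isCoprime_of_prime_dvd ?_ fun r hr hra hrb => ?_
  · rintro ⟨rfl, rfl⟩
    have hm : m = 0 := by simpa [hq.ne_zero] using h
    exact hqam ⟨dvd_zero q, hm ▸ dvd_zero q⟩
  · have hrqm : r ∣ q * m := h ▸ dvd_sub (dvd_pow hra two_ne_zero) (dvd_pow hrb two_ne_zero)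
    rcases hr.dvd_mul.mp hrqm with hrq | hrm
    · have hqr : q ∣ r := (hr.associated_of_dvd hq hrq).symm.dvd
      obtain ⟨a', rfl⟩ := hqr.trans hra
      obtain ⟨b', rfl⟩ := hqr.trans hrb
      exact hqam ⟨dvd_mul_right q a', a' ^ 2 - b' ^ 2,
        mul_left_cancel₀ hq.ne_zero (by linear_combination -h)⟩
    · exact hr.not_isUnit (ham.isUnit_of_dvd' hra hrm)

lemma exists_add_eq_of_mul_eq_four_mul_prime_mul_pow_four {s w q c : ℤ} (hq : Prime q) (hc : 0 < c)
    (hs : 0 < s) (hw : 0 < w) (hsw : IsCoprime s w) (hodd : Odd (s + w))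
    (h : s * w = 4 * q * c ^ 4) :
    ∃ f g, 0 < f ∧ 0 < g ∧ f * g = c ∧ Odd g ∧
      (s + w = q * g ^ 4 + 4 * f ^ 4 ∨ s + w = g ^ 4 + 4 * q * f ^ 4) := by
  wlog hs2 : Odd s generalizing s w
  · have hw2 : Odd w := (Int.odd_add'.mp hodd).mpr (Int.not_odd_iff_even.mp hs2)
    obtain ⟨f, g, hf, hg, hfg, hg2, hsum⟩ :=
      this hw hs hsw.symm (by rwa [add_comm]) (by rwa [mul_comm]) hw2
    exact ⟨f, g, hf, hg, hfg, hg2, by rwa [add_comm]⟩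
  have h4w : (2 : ℤ) ^ 2 ∣ w := by
    have h2s : IsCoprime (2 : ℤ) s :=
      Int.prime_two.coprime_iff_not_dvd.mpr (by rwa [← even_iff_two_dvd, Int.not_even_iff_odd])
    exact h2s.pow_left.dvd_of_dvd_mul_left ⟨q * c ^ 4, by linear_combination h⟩
  obtain ⟨w₀, rfl⟩ := h4w
  have h₀ : s * w₀ = q * c ^ 4 := mul_left_cancel₀ four_ne_zero (by linear_combination h)
  obtain ⟨g, f, hg, hf, hgf, hsw₀⟩ := exists_pow_four_of_mul_eq_prime_mul_pow_four hq hc hs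
    (by linarith) (hsw.of_isCoprime_of_dvd_right (dvd_mul_left w₀ _)) h₀
  refine ⟨f, g, hf, hg, by rw [mul_comm, hgf], ?_, ?_⟩
  · rcases hsw₀ with ⟨rfl, -⟩ | ⟨rfl, -⟩
    · exact (Int.odd_pow' four_ne_zero).mp (Int.odd_mul.mp hs2).2
    · exact (Int.odd_pow' four_ne_zero).mp hs2
  · rcases hsw₀ with ⟨rfl, rfl⟩ | ⟨rfl, rfl⟩
    · left; ring
    · right; ring

lemma intCast_two_mul_eq_zero_of_four_dvd {n : ℤ} (hn : 4 ∣ n) : (2 * n : ZMod 8) = 0 := by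
  obtain ⟨k, rfl⟩ := hn
  push_cast
  rw [← mul_assoc, show (2 * 4 : ZMod 8) = 0 by decide, zero_mul]

lemma intCast_eq_three_of_emod_eight {N : ℤ} (hN : N % 8 = 3) : (N : ZMod 8) = 3 := by
  rw [← ZMod.intCast_mod, Nat.cast_ofNat, hN]; rfl

lemma even_of_pow_four_add_two_mul_sub_eq_sq {n N x y z : ℤ} (hn : 4 ∣ n) (hN : N % 8 = 3)
    (h : x ^ 4 + 2 * n * x ^ 2 * y ^ 2 - N * y ^ 4 = z ^ 2) : Even y := by
  by_contra hy
  obtain ⟨k, rfl⟩ := Int.not_even_iff_odd.mp hy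
  have h8 := congrArg (Int.cast : ℤ → ZMod 8) h
  push_cast [intCast_eq_three_of_emod_eight hN] at h8
  have key : (x : ZMod 8) ^ 4 - 3 * (2 * k + 1) ^ 4 = z ^ 2 := by
    linear_combination h8 - x ^ 2 * (2 * k + 1) ^ 2 * intCast_two_mul_eq_zero_of_four_dvd hn
  exact (by decide : ∀ a b c : ZMod 8, a ^ 4 - 3 * (2 * c + 1) ^ 4 ≠ b ^ 2) _ _ _ key

lemma sq_add_ne_mul_pow_four_add_four_mul {n p x c d : ℤ} (hn : 4 ∣ n) (hp : p % 8 = 3)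
    (hd : Odd d) : x ^ 2 + n * (2 * c * d) ^ 2 ≠ p * d ^ 4 + 4 * c ^ 4 := by
  obtain ⟨k, rfl⟩ := hd
  intro h
  have h8 := congrArg (Int.cast : ℤ → ZMod 8) h
  push_cast [intCast_eq_three_of_emod_eight hp] at h8
  have key : (x : ZMod 8) ^ 2 = 3 * (2 * k + 1) ^ 4 + 4 * c ^ 4 := by
    linear_combination h8 - 2 * c ^ 2 * (2 * k + 1) ^ 2 * intCast_two_mul_eq_zero_of_four_dvd hn
  exact (by decide : ∀ a b j : ZMod 8, a ^ 2 ≠ 3 * (2 * j + 1) ^ 4 + 4 * b ^ 4) _ _ _ key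

lemma sq_ne_mul_pow_four_sub_pow_four_add {n N f g d : ℤ} (hn : 4 ∣ n) (hN : N % 8 = 3)
    (hfg : Odd f ∨ Odd g) : d ^ 2 ≠ N * g ^ 4 - f ^ 4 + 2 * n * (f * g) ^ 2 := by
  intro h
  have h8 := congrArg (Int.cast : ℤ → ZMod 8) h
  push_cast [intCast_eq_three_of_emod_eight hN] at h8
  have key : (d : ZMod 8) ^ 2 = 3 * g ^ 4 - f ^ 4 := by
    linear_combination h8 + (f * g) ^ 2 * intCast_two_mul_eq_zero_of_four_dvd hn
  rcases hfg with ⟨k, rfl⟩ | ⟨k, rfl⟩ <;> push_cast at key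
  · exact (by decide : ∀ a b j : ZMod 8, a ^ 2 ≠ 3 * b ^ 4 - (2 * j + 1) ^ 4) _ _ _ key
  · exact (by decide : ∀ a b j : ZMod 8, a ^ 2 ≠ 3 * (2 * j + 1) ^ 4 - b ^ 4) _ _ _ key

lemma exists_solution_le_of_sq_eq_sq_add {n N x c d : ℤ} (hn : 4 ∣ n) (hN : N % 8 = 3)
    (hN0 : 0 < N) (hNp : Prime N) (hx : 0 < x) (hc : 0 < c) (hxc : IsCoprime x (4 * c ^ 4))
    (h : x ^ 2 = (d ^ 2 - 2 * n * c ^ 2) ^ 2 + 4 * N * c ^ 4) :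
    ∃ x' y' z', 0 < x' ∧ 0 < y' ∧ y' ≤ c ∧
      x' ^ 4 + 2 * n * x' ^ 2 * y' ^ 2 - N * y' ^ 4 = z' ^ 2 := by
  have hxe : IsCoprime x (d ^ 2 - 2 * n * c ^ 2) :=
    isCoprime_of_sq_sub_sq_eq_prime_mul hNp hxc (by linear_combination h)
  obtain ⟨u, v, rfl, hvu, huv, hcop⟩ :=
    exists_add_sub_eq_of_sq_sub_sq_eq_four_mul hxe (k := N * c ^ 4) (by linear_combination h)
  obtain ⟨hu, hv⟩ : 0 < u ∧ 0 < v :=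
    (pos_and_pos_or_neg_and_neg_of_mul_pos (huv ▸ by positivity)).resolve_right
      fun ⟨hu, hv⟩ => by linarith
  obtain ⟨f, g, hf, hg, rfl, ⟨rfl, rfl⟩ | ⟨rfl, rfl⟩⟩ :=
    exists_pow_four_of_mul_eq_prime_mul_pow_four hNp hc hu hv hcop huv
  · exact ⟨g, f, d, hg, hf, le_mul_of_one_le_right hf.le hg, by linear_combination -hvu⟩
  · have hfg : Odd f ∨ Odd g := by
      by_contra! hfg
      have h2f := (Int.not_odd_iff_even.mp hfg.1).two_dvd
      have h2g := (Int.not_odd_iff_even.mp hfg.2).two_dvd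
      exact Int.prime_two.not_isUnit (hcop.isUnit_of_dvd' (dvd_pow h2f four_ne_zero)
        (dvd_mul_of_dvd_right (dvd_pow h2g four_ne_zero) N))
    exact (sq_ne_mul_pow_four_sub_pow_four_add (d := d) hn hN hfg
      (by linear_combination hvu)).elim

lemma exists_solution_lt_of_isCoprime {n p N x y z : ℤ} (hn : 0 < n) (hn4 : 4 ∣ n)
    (hp : Prime p) (hp8 : p % 8 = 3) (hN : N = p - n ^ 2) (hN0 : 0 < N) (hNp : Prime N)
    (hx : 0 < x) (hy : 0 < y) (hxy : IsCoprime x y)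
    (h : x ^ 4 + 2 * n * x ^ 2 * y ^ 2 - N * y ^ 4 = z ^ 2) :
    ∃ x' y' z', 0 < x' ∧ 0 < y' ∧ y' < y ∧
      x' ^ 4 + 2 * n * x' ^ 2 * y' ^ 2 - N * y' ^ 4 = z' ^ 2 := by
  have hN8 : N % 8 = 3 := by
    obtain ⟨k, hk⟩ := hn4
    have : N = p - 16 * k ^ 2 := by rw [hN, hk]; ring
    omega
  have hp0 : 0 < p := by linarith [sq_nonneg n]
  obtain ⟨y₁, rfl⟩ := (even_of_pow_four_add_two_mul_sub_eq_sq hn4 hN8 h).two_dvd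
  have hy₁ : 0 < y₁ := by omega
  have hx2 : Odd x := Int.not_even_iff_odd.mp fun hx2 =>
    Int.prime_two.not_isUnit (hxy.isUnit_of_dvd' hx2.two_dvd (dvd_mul_right 2 y₁))
  set A := x ^ 2 + n * (2 * y₁) ^ 2 with hA
  have hA0 : 0 < A := by positivity
  have hAodd : Odd A := hx2.pow.add_even ⟨2 * n * y₁ ^ 2, by ring⟩
  have hAy : IsCoprime A (2 * y₁) := by
    have := (hxy.pow_left (m := 2)).add_mul_left_left (n * (2 * y₁))
    rwa [show x ^ 2 + 2 * y₁ * (n * (2 * y₁)) = A by rw [hA]; ring] at this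
  have hAz : IsCoprime A z := isCoprime_of_sq_sub_sq_eq_prime_mul hp (hAy.pow_right (n := 4))
    (by rw [hN] at h; linear_combination h)
  obtain ⟨u, v, hAuv, -, huv, hcop⟩ :=
    exists_add_sub_eq_of_sq_sub_sq_eq_four_mul hAz (k := 4 * p * y₁ ^ 4)
      (by rw [hN] at h; linear_combination h)
  obtain ⟨hu, hv⟩ : 0 < u ∧ 0 < v :=
    (pos_and_pos_or_neg_and_neg_of_mul_pos (huv ▸ by positivity)).resolve_right
      fun ⟨hu, hv⟩ => by linarith
  obtain ⟨c, d, hc, hd, rfl, hd2, hsum | hsum⟩ :=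
    exists_add_eq_of_mul_eq_four_mul_prime_mul_pow_four hp hy₁ hu hv hcop (hAuv ▸ hAodd) huv
  · exact (sq_add_ne_mul_pow_four_add_four_mul (x := x) (c := c) hn4 hp8 hd2
      (by linear_combination hAuv.trans hsum)).elim
  · have hxc : IsCoprime x (4 * c ^ 4) :=
      (hxy.pow_right (n := 4)).of_isCoprime_of_dvd_right ⟨4 * d ^ 4, by ring⟩
    obtain ⟨x', y', z', hx', hy', hle, h'⟩ :=
      exists_solution_le_of_sq_eq_sq_add (d := d) hn4 hN8 hN0 hNp hx hc hxc
        (by rw [hN]; linear_combination hAuv.trans hsum)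
    exact ⟨x', y', z', hx', hy', by nlinarith, h'⟩

lemma exists_isCoprime_solution {n N x y z : ℤ} (hx : 0 < x) (hy : 0 < y)
    (h : x ^ 4 + 2 * n * x ^ 2 * y ^ 2 - N * y ^ 4 = z ^ 2) :
    ∃ x' y' z', 0 < x' ∧ 0 < y' ∧ y' ≤ y ∧ IsCoprime x' y' ∧
      x' ^ 4 + 2 * n * x' ^ 2 * y' ^ 2 - N * y' ^ 4 = z' ^ 2 := by
  obtain ⟨g, x', y', hg, hxy', rfl, rfl⟩ :=
    Int.exists_gcd_one' (Int.gcd_pos_of_ne_zero_left y hx.ne')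
  have hg' : (0 : ℤ) < g := by exact_mod_cast hg
  obtain ⟨z', rfl⟩ : (g : ℤ) ^ 2 ∣ z := (Int.pow_dvd_pow_iff two_ne_zero).mp
    ⟨x' ^ 4 + 2 * n * x' ^ 2 * y' ^ 2 - N * y' ^ 4, by linear_combination -h⟩
  refine ⟨x', y', z', pos_of_mul_pos_left hx hg'.le, pos_of_mul_pos_left hy hg'.le,
    le_mul_of_one_le_right (pos_of_mul_pos_left hy hg'.le).le (by exact_mod_cast hg),
    Int.isCoprime_iff_gcd_eq_one.mpr hxy', ?_⟩
  exact mul_left_cancel₀ (pow_ne_zero 4 hg'.ne') (by linear_combination h)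

theorem stmt2 (n p N : ℤ) (hn : 0 < n) (hn4 : n % 4 = 0)
    (hp : Prime p) (hp8 : p % 8 = 3)
    (hN : N = p - n ^ 2) (hNpos : 0 < N) (hNprime : Prime N) :
    ¬ ∃ x y z : ℤ, 0 < x ∧ 0 < y ∧ 0 < z ∧
      x ^ 4 + 2 * n * x ^ 2 * y ^ 2 - N * y ^ 4 = z ^ 2 := by
  rintro ⟨x, y, z, hx, hy, -, h⟩
  induction hk : y.toNat using Nat.strong_induction_on generalizing x y z with
  | _ k ih =>
    obtain ⟨x₁, y₁, z₁, hx₁, hy₁, hle, hcop, h₁⟩ := exists_isCoprime_solution hx hy h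
    obtain ⟨x₂, y₂, z₂, hx₂, hy₂, hlt, h₂⟩ := exists_solution_lt_of_isCoprime hn
      (Int.dvd_of_emod_eq_zero hn4) hp hp8 hN hNpos hNprime hx₁ hy₁ hcop h₁
    exact ih y₂.toNat (by omega) x₂ y₂ z₂ hx₂ hy₂ h₂ rfl
end

section
/- The diophantine equation x⁴ + 8x²y² + 13y⁴ = z² has no solution in positive integers x, y, z. -/
/-!
Fermat descent on `y`. In a primitive solution `y` must be even (modulo 16), say `y = 2v`, and
`x` is odd. Then `(x² + 16v²)² - z² = 48v⁴`, and the two coprime factors of `12v⁴` coming from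
this difference of squares force `x² + 16v² = a⁴ + 12b⁴` with `ab = v` (the other split,
`3a⁴ + 4b⁴`, fails modulo 16). This rewrites as `(a² - 8b²)² = x² + 52b⁴`, and the same
splitting gives `|a² - 8b²| = 13e⁴ + f⁴` with `ef = b`. The sign `a² < 8b²` fails modulo 8;
otherwise `a² = f⁴ + 8f²e² + 13e⁴` is a new solution with `e ≤ b < y`.
-/

theorem Nat.exists_eq_add_add_of_sq_eq_sq_add_four_mul {U x N : ℕ}
    (h : U ^ 2 = x ^ 2 + 4 * N) : ∃ p, U = p + (p + x) ∧ p * (p + x) = N := by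
  obtain ⟨d, rfl⟩ := Nat.exists_eq_add_of_le
    (Nat.pow_le_pow_iff_left two_ne_zero |>.mp (h ▸ Nat.le_add_right _ _))
  have hd : d ^ 2 + 2 * (x * d) = 4 * N := by linarith [h]
  have : Even (d ^ 2) := by
    have h4 : Even (4 * N) := ⟨2 * N, by ring⟩
    rw [← hd] at h4
    exact (Nat.even_add.mp h4).mpr (even_two_mul _)
  obtain ⟨p, rfl⟩ := (Nat.even_pow' two_ne_zero).mp this
  exact ⟨p, by ring, by nlinarith⟩

theorem Nat.exists_coprime_of_sq_eq_sq_add_four_mul {U x k m n : ℕ}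
    (h : U ^ 2 = x ^ 2 + 4 * (k * m ^ n)) (hk : Squarefree k) (hxm : x.Coprime m) :
    ∃ p q, p.Coprime q ∧ p * q = k * m ^ n ∧ U = p + q := by
  obtain ⟨p, rfl, hp⟩ := Nat.exists_eq_add_add_of_sq_eq_sq_add_four_mul h
  refine ⟨p, p + x, ?_, hp, rfl⟩
  rw [add_comm, Nat.coprime_add_self_right]
  refine Nat.coprime_of_dvd fun r hr hrp hrx ↦ ?_
  have hrm : r.Coprime m := (hr.coprime_iff_not_dvd).mpr fun hrm ↦
    hr.one_lt.ne' (Nat.eq_one_of_dvd_coprimes hxm hrx hrm)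
  refine Nat.squarefree_iff_prime_squarefree.mp hk r hr
    (((hrm.mul_left hrm).pow_right n).dvd_of_dvd_mul_right ?_)
  exact hp ▸ mul_dvd_mul hrp (dvd_add hrp hrx)

theorem Nat.exists_eq_mul_pow_of_coprime_of_mul_eq {s t c d m k : ℕ} (hk : k ≠ 0)
    (hst : s.Coprime t) (h : s * t = c * d * m ^ k) (hc : c ∣ s) (hd : d ∣ t)
    (hc0 : 0 < c) (hd0 : 0 < d) : ∃ a b, s = c * a ^ k ∧ t = d * b ^ k ∧ a * b = m := by
  obtain ⟨s', rfl⟩ := hc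
  obtain ⟨t', rfl⟩ := hd
  have h' : s' * t' = m ^ k := by
    apply Nat.eq_of_mul_eq_mul_left (Nat.mul_pos hc0 hd0)
    rw [← h]; ring
  have hco : s'.Coprime t' :=
    (hst.coprime_dvd_left (dvd_mul_left _ _)).coprime_dvd_right (dvd_mul_left _ _)
  obtain ⟨a, rfl⟩ := exists_eq_pow_of_mul_eq_pow (Nat.isUnit_iff.mpr hco) h'
  obtain ⟨b, rfl⟩ := exists_eq_pow_of_mul_eq_pow (Nat.isUnit_iff.mpr hco.symm)
    ((mul_comm _ _).trans h')
  exact ⟨a, b, rfl, rfl, Nat.pow_left_injective hk (by simp only [mul_pow, h'])⟩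

theorem Nat.exists_add_eq_of_coprime_of_mul_eq_twelve_mul {s t m : ℕ} (hst : s.Coprime t)
    (h : s * t = 12 * m ^ 4) :
    ∃ a b, a * b = m ∧ (s + t = a ^ 4 + 12 * b ^ 4 ∨ s + t = 3 * a ^ 4 + 4 * b ^ 4) := by
  wlog h3 : 3 ∣ s generalizing s t
  · have h3t : 3 ∣ t := (Nat.prime_three.dvd_mul.mp
      (h ▸ dvd_mul_of_dvd_left (by norm_num) _)).resolve_left h3
    obtain ⟨a, b, hab, hsum⟩ := this hst.symm (by rw [mul_comm, h]) h3t
    exact ⟨a, b, hab, by rwa [add_comm]⟩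
  rcases (hst.isPrimePow_dvd_mul (by decide : IsPrimePow 4)).mp
    (h ▸ dvd_mul_of_dvd_left (by norm_num) _) with h4 | h4
  · obtain ⟨b, a, rfl, rfl, hba⟩ := Nat.exists_eq_mul_pow_of_coprime_of_mul_eq four_ne_zero hst
      (c := 12) (d := 1) (by simpa using h)
      (Nat.Coprime.mul_dvd_of_dvd_of_dvd (by norm_num) h3 h4) (one_dvd _) (by norm_num) one_pos
    exact ⟨a, b, by rw [mul_comm, hba], Or.inl (by ring)⟩
  · obtain ⟨a, b, rfl, rfl, hab⟩ := Nat.exists_eq_mul_pow_of_coprime_of_mul_eq four_ne_zero hst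
      (c := 3) (d := 4) (by simpa using h) h3 h4 (by norm_num) (by norm_num)
    exact ⟨a, b, hab, Or.inr rfl⟩

theorem Nat.exists_add_eq_of_coprime_of_mul_eq_thirteen_mul {p q m : ℕ} (hpq : p.Coprime q)
    (h : p * q = 13 * m ^ 4) : ∃ e f, e * f = m ∧ p + q = 13 * e ^ 4 + f ^ 4 := by
  wlog h13 : 13 ∣ p generalizing p q
  · have h13q : 13 ∣ q := (((by norm_num : Nat.Prime 13).dvd_mul).mp
      (h ▸ dvd_mul_right _ _)).resolve_left h13
    obtain ⟨e, f, hef, hsum⟩ := this hpq.symm (by rw [mul_comm, h]) h13q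
    exact ⟨e, f, hef, by rwa [add_comm]⟩
  obtain ⟨e, f, rfl, rfl, hef⟩ := Nat.exists_eq_mul_pow_of_coprime_of_mul_eq four_ne_zero hpq
    (c := 13) (d := 1) (by simpa using h) h13 (one_dvd _) (by norm_num) one_pos
  exact ⟨e, f, hef, by ring⟩

def IsSolution (x y z : ℕ) : Prop :=
  0 < x ∧ 0 < y ∧ x ^ 4 + 8 * x ^ 2 * y ^ 2 + 13 * y ^ 4 = z ^ 2

theorem IsSolution.exists_coprime {x y z : ℕ} (h : IsSolution x y z) :
    ∃ X Y Z, IsSolution X Y Z ∧ X.Coprime Y ∧ Y ≤ y := by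
  obtain ⟨hx, hy, heq⟩ := h
  obtain ⟨d, X, Y, hd, hco, rfl, rfl⟩ := Nat.exists_coprime' (Nat.gcd_pos_of_pos_left y hx)
  have hXY : (X ^ 4 + 8 * X ^ 2 * Y ^ 2 + 13 * Y ^ 4) * (d ^ 2) ^ 2 = z ^ 2 := by
    rw [← heq]; ring
  obtain ⟨Z, rfl⟩ := (Nat.pow_dvd_pow_iff two_ne_zero).mp (Dvd.intro_left _ hXY)
  refine ⟨X, Y, Z, ⟨Nat.pos_of_mul_pos_right hx, Nat.pos_of_mul_pos_right hy, ?_⟩, hco,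
    Nat.le_mul_of_pos_right Y hd⟩
  apply Nat.eq_of_mul_eq_mul_right (pow_pos (pow_pos hd 2) 2)
  rw [hXY]; ring

theorem IsSolution.even_y {x y z : ℕ} (h : IsSolution x y z) : Even y := by
  refine Nat.not_odd_iff_even.mp fun ⟨l, hl⟩ ↦ ?_
  replace h := hl ▸ h.2.2
  have := congrArg (Nat.cast : ℕ → ZMod 16) h
  push_cast at this
  exact (by decide : ∀ a l c : ZMod 16, a^4 + 8*a^2*(2*l+1)^2 + 13*(2*l+1)^4 ≠ c^2) _ _ _ this

theorem three_mul_pow_four_add_ne_of_odd {a b x v : ℕ} (hx : Odd x) :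
    3 * a ^ 4 + 4 * b ^ 4 ≠ x ^ 2 + 16 * v ^ 2 := by
  obtain ⟨m, rfl⟩ := hx
  intro h
  have := congrArg (Nat.cast : ℕ → ZMod 16) h
  push_cast at this
  reduce_mod_char at this
  exact (by decide : ∀ a b m : ZMod 16, 3 * a^4 + 4 * b^4 ≠ (2*m+1)^2) _ _ _ this

theorem sq_add_ne_eight_mul_of_odd {a e f : ℕ} (ha : Odd a) :
    a ^ 2 + (13 * e ^ 4 + f ^ 4) ≠ 8 * (e * f) ^ 2 := by
  obtain ⟨k, rfl⟩ := ha
  intro h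
  have := congrArg (Nat.cast : ℕ → ZMod 8) h
  push_cast at this
  reduce_mod_char at this
  exact (by decide : ∀ k e f : ZMod 8, (2*k+1)^2 + (5 * e^4 + f^4) ≠ 0) _ _ _ this

theorem exists_pow_four_add_eq_of_isSolution {x v z : ℕ} (h : IsSolution x (2 * v) z)
    (hco : x.Coprime (2 * v)) : ∃ a b, a * b = v ∧ a ^ 4 + 12 * b ^ 4 = x ^ 2 + 16 * v ^ 2 := by
  obtain ⟨-, -, heq⟩ := h
  have hz : z.Coprime (2 * v ^ 2) := by
    have : (z ^ 2).Coprime (2 * v) := by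
      rw [← heq, show x ^ 4 + 8 * x ^ 2 * (2 * v) ^ 2 + 13 * (2 * v) ^ 4
        = x ^ 4 + (16 * x ^ 2 * v + 104 * v ^ 3) * (2 * v) by ring,
        Nat.coprime_add_mul_right_left]
      exact hco.pow_left 4
    exact ((this.coprime_dvd_left (dvd_pow_self z two_ne_zero)).pow_right 2).coprime_dvd_right
      ⟨2, by ring⟩
  -- `48v⁴ = 4 · 3 · (2v²)²`, so that the remaining cofactor `3` is squarefree
  have hw : (x ^ 2 + 16 * v ^ 2) ^ 2 = z ^ 2 + 4 * (3 * (2 * v ^ 2) ^ 2) := by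
    rw [← heq]; ring
  obtain ⟨s, t, hst, hprod, hsum⟩ := Nat.exists_coprime_of_sq_eq_sq_add_four_mul hw
    Nat.prime_three.prime.squarefree hz
  obtain ⟨a, b, hab, hsum' | hsum'⟩ :=
    Nat.exists_add_eq_of_coprime_of_mul_eq_twelve_mul hst (by rw [hprod]; ring)
  · exact ⟨a, b, hab, by rw [hsum, ← hsum']⟩
  · exact absurd (hsum' ▸ hsum).symm (three_mul_pow_four_add_ne_of_odd
      (hco.coprime_dvd_right (dvd_mul_right 2 v)).odd_of_right)

theorem exists_isSolution_of_pow_four_add_eq {x a b : ℕ} (hx : Odd x) (hxb : x.Coprime b)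
    (hb : 0 < b) (h : a ^ 4 + 12 * b ^ 4 = x ^ 2 + 16 * (a * b) ^ 2) :
    ∃ X Y Z, IsSolution X Y Z ∧ Y ≤ b := by
  have ha : Odd a := by
    simpa [Nat.even_add, Nat.even_pow, Nat.even_mul, (by decide : Even 12),
      (by decide : Even 16), Nat.not_even_iff_odd.mpr hx] using congrArg Even h
  obtain ⟨U, hU⟩ : ∃ U, a ^ 2 = 8 * b ^ 2 + U ∨ 8 * b ^ 2 = a ^ 2 + U := by
    rcases le_total (8 * b ^ 2) (a ^ 2) with hle | hle
    · exact (Nat.exists_eq_add_of_le hle).imp fun _ ↦ Or.inl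
    · exact (Nat.exists_eq_add_of_le hle).imp fun _ ↦ Or.inr
  have hU2 : U ^ 2 = x ^ 2 + 4 * (13 * b ^ 4) := by
    rcases hU with hU | hU <;> nlinarith
  obtain ⟨p, q, hpq, hprod, rfl⟩ := Nat.exists_coprime_of_sq_eq_sq_add_four_mul hU2
    (by norm_num : Nat.Prime 13).prime.squarefree hxb
  obtain ⟨e, f, rfl, hsum⟩ := Nat.exists_add_eq_of_coprime_of_mul_eq_thirteen_mul hpq hprod
  rw [hsum] at hU
  obtain ⟨he, hf⟩ := CanonicallyOrderedAdd.mul_pos.mp hb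
  rcases hU with hU | hU
  · exact ⟨f, e, a, ⟨hf, he, by rw [hU]; ring⟩, Nat.le_mul_of_pos_right e hf⟩
  · exact absurd hU.symm (sq_add_ne_eight_mul_of_odd ha)

theorem IsSolution.exists_lt {x y z : ℕ} (h : IsSolution x y z) (hco : x.Coprime y) :
    ∃ X Y Z, IsSolution X Y Z ∧ Y < y := by
  obtain ⟨v, rfl⟩ := h.even_y
  rw [← two_mul] at h hco ⊢
  obtain ⟨a, b, rfl, hab⟩ := exists_pow_four_add_eq_of_isSolution h hco
  obtain ⟨ha, hb⟩ := CanonicallyOrderedAdd.mul_pos.mp (Nat.pos_of_mul_pos_left h.2.1)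
  obtain ⟨X, Y, Z, hXYZ, hY⟩ := exists_isSolution_of_pow_four_add_eq
    (hco.coprime_dvd_right (dvd_mul_right 2 _)).odd_of_right
    (hco.coprime_dvd_right (dvd_mul_of_dvd_right (dvd_mul_left b a) 2)) hb hab
  exact ⟨X, Y, Z, hXYZ, hY.trans_lt (by nlinarith)⟩

theorem not_isSolution (x y z : ℕ) : ¬ IsSolution x y z := by
  induction y using Nat.strong_induction_on generalizing x z with
  | _ y ih =>
    intro h
    obtain ⟨X, Y, Z, hXYZ, hco, hY⟩ := h.exists_coprime
    obtain ⟨X', Y', Z', h', hY'⟩ := hXYZ.exists_lt hco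
    exact ih Y' (by omega) X' Z' h'

theorem stmt4 :
    ¬ ∃ x y z : ℤ, 0 < x ∧ 0 < y ∧ 0 < z ∧
      x ^ 4 + 8 * x ^ 2 * y ^ 2 + 13 * y ^ 4 = z ^ 2 := by
  rintro ⟨x, y, z, hx, hy, hz, h⟩
  lift x to ℕ using hx.le
  lift y to ℕ using hy.le
  lift z to ℕ using hz.le
  exact not_isSolution x y z ⟨by exact_mod_cast hx, by exact_mod_cast hy, by exact_mod_cast h⟩
end

section
/- The diophantine equation x⁴ + 8x²y² + 5y⁴ = z² has no solution in positive integers x, y, z. -/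
/-!
Infinite descent on `y`. For a primitive solution (`gcd x y = 1`) `y` is even, since for odd
`y` the left side is not a square mod 16. Writing `y = 2c`, the factorisation
`(x² + 16c²)² - z² = 176c⁴` splits `44c⁴` into two coprime halves, which forces `c = pq`
with `x² + 16p²q² = 44p⁴ + q⁴` (the other placement of the factor 11 is impossible mod 16).
Then `(q² - 8p²)² - x² = 20p⁴` splits `5p⁴` in the same way, giving `p = ab` and
`|q² - 8p²| = a⁴ + 5b⁴`. The sign `q² < 8p²` is impossible mod 16, so `(a, b, q)` is a new
solution with `b < y`.
-/

theorem Int.exists_pos_pow_eq_of_mul_eq_pow {a b c : ℤ} {n : ℕ} (hn : n ≠ 0)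
    (hab : IsCoprime a b) (h : a * b = c ^ n) (ha : 0 < a) : ∃ d, 0 < d ∧ a = d ^ n := by
  obtain ⟨d, hd⟩ := exists_associated_pow_of_mul_eq_pow' hab h
  have habs : |d ^ n| = |a| := by
    rw [Int.abs_eq_natAbs, Int.abs_eq_natAbs, Int.associated_iff_natAbs.mp hd]
  have hd0 : d ≠ 0 := by
    rintro rfl
    rw [zero_pow hn, abs_zero] at habs
    exact ha.ne' (abs_eq_zero.mp habs.symm)
  exact ⟨|d|, abs_pos.mpr hd0, by rw [← abs_pow, habs, abs_of_pos ha]⟩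

theorem Int.exists_eq_prime_mul_pow_of_prime_dvd {k U V c : ℤ} {n : ℕ} (hn : n ≠ 0)
    (hk : Prime k) (hU : 0 < U) (hV : 0 < V) (hc : 0 < c) (hUV : IsCoprime U V)
    (h : U * V = k * c ^ n) (hkU : k ∣ U) :
    ∃ p q, 0 < p ∧ 0 < q ∧ p * q = c ∧ U = k * p ^ n ∧ V = q ^ n := by
  obtain ⟨m, rfl⟩ := hkU
  have hmV : m * V = c ^ n := mul_left_cancel₀ hk.ne_zero (by rw [← h]; ring)
  have hm : 0 < m := pos_of_mul_pos_left (hmV ▸ pow_pos hc n) hV.le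
  have hcop : IsCoprime m V := hUV.of_mul_left_right
  obtain ⟨p, hp, rfl⟩ := Int.exists_pos_pow_eq_of_mul_eq_pow hn hcop hmV hm
  obtain ⟨q, hq, rfl⟩ :=
    Int.exists_pos_pow_eq_of_mul_eq_pow hn hcop.symm (by rw [mul_comm, hmV]) hV
  refine ⟨p, q, hp, hq, ?_, rfl, rfl⟩
  rwa [← pow_left_inj₀ (mul_pos hp hq).le hc.le hn, mul_pow]

theorem Int.exists_eq_prime_mul_pow_of_mul_eq {k U V c : ℤ} {n : ℕ} (hn : n ≠ 0)
    (hk : Prime k) (hU : 0 < U) (hV : 0 < V) (hc : 0 < c) (hUV : IsCoprime U V)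
    (h : U * V = k * c ^ n) :
    ∃ p q, 0 < p ∧ 0 < q ∧ p * q = c ∧
      (U = k * p ^ n ∧ V = q ^ n ∨ U = p ^ n ∧ V = k * q ^ n) := by
  rcases hk.dvd_mul.mp (Dvd.intro _ h.symm) with hkU | hkV
  · obtain ⟨p, q, hp, hq, hpq, hU', hV'⟩ :=
      exists_eq_prime_mul_pow_of_prime_dvd hn hk hU hV hc hUV h hkU
    exact ⟨p, q, hp, hq, hpq, .inl ⟨hU', hV'⟩⟩
  · obtain ⟨q, p, hq, hp, hqp, hV', hU'⟩ :=
      exists_eq_prime_mul_pow_of_prime_dvd hn hk hV hU hc hUV.symm (by rw [mul_comm, h]) hkV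
    exact ⟨p, q, hp, hq, by rw [mul_comm, hqp], .inr ⟨hU', hV'⟩⟩

theorem Int.isCoprime_of_mul_eq_squarefree_mul_pow {u v k m s : ℤ} {n : ℕ}
    (hk : Squarefree k) (h : u * v = k * m ^ n) (hm : IsCoprime (s * u + v) m) :
    IsCoprime u v := by
  refine isCoprime_of_prime_dvd ?_ fun q hq hqu hqv ↦ ?_
  · rintro ⟨rfl, rfl⟩
    rw [zero_mul, eq_comm, mul_eq_zero] at h
    rcases h with rfl | hmn
    · exact not_squarefree_zero hk
    · rw [mul_zero, add_zero, isCoprime_zero_left] at hm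
      exact (hm.pow (n := n)).ne_zero hmn
  have hqm : ¬ q ∣ m := fun hqm ↦
    hq.not_isUnit (hm.isUnit_of_dvd' (dvd_add (hqu.mul_left s) hqv) hqm)
  have hq2 : q * q ∣ k * m ^ n := h ▸ mul_dvd_mul hqu hqv
  have hcop : IsCoprime (q * q) (m ^ n) :=
    ((hq.coprime_iff_not_dvd.mpr hqm).mul_left (hq.coprime_iff_not_dvd.mpr hqm)).pow_right
  exact hq.not_isUnit (hk q (hcop.dvd_of_dvd_mul_right hq2))

theorem Int.exists_add_eq_mul_eq_of_sq_eq_sq_add {A z M : ℤ} (hA : Odd A) (hz : Odd z)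
    (hA0 : 0 < A) (hM : 0 < M) (h : A ^ 2 = z ^ 2 + 4 * M) :
    ∃ u v, 0 < u ∧ 0 < v ∧ u + v = A ∧ u * v = M := by
  obtain ⟨u, hu⟩ := hA.sub_odd hz
  have hz' : z = A - 2 * u := by linarith
  have huv : u * (A - u) = M :=
    mul_left_cancel₀ four_ne_zero (by rw [hz'] at h; linear_combination h)
  have hu0 : 0 < u := by nlinarith
  exact ⟨u, A - u, hu0, by nlinarith, by ring, huv⟩

theorem quartic_ne_sq_of_odd {x y z : ℤ} (hy : Odd y) :
    x ^ 4 + 8 * x ^ 2 * y ^ 2 + 5 * y ^ 4 ≠ z ^ 2 := by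
  obtain ⟨k, rfl⟩ := hy
  have mod16 : ∀ a k c : ZMod 16,
      a ^ 4 + 8 * a ^ 2 * (2 * k + 1) ^ 2 + 5 * (2 * k + 1) ^ 4 ≠ c ^ 2 := by
    decide
  exact fun h ↦ mod16 x k z (by exact_mod_cast congrArg (Int.cast : ℤ → ZMod 16) h)

theorem sq_add_sixteen_mul_ne_of_odd {x p q : ℤ} (hq : Odd q) :
    x ^ 2 + 16 * p ^ 2 * q ^ 2 ≠ 4 * p ^ 4 + 11 * q ^ 4 := by
  obtain ⟨k, rfl⟩ := hq
  have mod16 : ∀ a b k : ZMod 16,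
      a ^ 2 + 16 * b ^ 2 * (2 * k + 1) ^ 2 ≠ 4 * b ^ 4 + 11 * (2 * k + 1) ^ 4 := by
    decide
  exact fun h ↦ mod16 x p k (by exact_mod_cast congrArg (Int.cast : ℤ → ZMod 16) h)

theorem sq_add_pow_four_add_five_mul_ne_of_odd {q a b : ℤ} (hq : Odd q) :
    q ^ 2 + a ^ 4 + 5 * b ^ 4 ≠ 8 * a ^ 2 * b ^ 2 := by
  obtain ⟨k, rfl⟩ := hq
  have mod16 : ∀ k a b : ZMod 16, (2 * k + 1) ^ 2 + a ^ 4 + 5 * b ^ 4 ≠ 8 * a ^ 2 * b ^ 2 := by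
    decide
  exact fun h ↦ mod16 k a b (by exact_mod_cast congrArg (Int.cast : ℤ → ZMod 16) h)

theorem exists_sq_add_sixteen_eq_of_quartic_eq_sq {x y z : ℤ} (hy : 0 < y) (hxy : IsCoprime x y)
    (h : x ^ 4 + 8 * x ^ 2 * y ^ 2 + 5 * y ^ 4 = z ^ 2) :
    Odd x ∧ ∃ p q, 0 < p ∧ 0 < q ∧ Odd q ∧ IsCoprime p q ∧ y = 2 * (p * q) ∧
      x ^ 2 + 16 * p ^ 2 * q ^ 2 = 44 * p ^ 4 + q ^ 4 := by
  obtain ⟨c, rfl⟩ : Even y := Int.not_odd_iff_even.mp fun hy ↦ quartic_ne_sq_of_odd hy h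
  have hc : 0 < c := by linarith
  have hxodd : Odd x := Int.not_even_iff_odd.mp fun ⟨m, hm⟩ ↦ by
    have := Int.isUnit_iff.mp <|
      hxy.isUnit_of_dvd' (show (2 : ℤ) ∣ x from ⟨m, by rw [hm]; ring⟩) ⟨c, by ring⟩
    omega
  have hAodd : Odd (x ^ 2 + 16 * c ^ 2) := hxodd.pow.add_even ⟨8 * c ^ 2, by ring⟩
  have hA : (x ^ 2 + 16 * c ^ 2) ^ 2 = z ^ 2 + 4 * (44 * c ^ 4) := by linear_combination h
  have hzodd : Odd z := (Int.odd_pow' two_ne_zero).mp <| by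
    rw [show z ^ 2 = (x ^ 2 + 16 * c ^ 2) ^ 2 - 176 * c ^ 4 by linear_combination -hA]
    exact hAodd.pow.sub_even ⟨88 * c ^ 4, by ring⟩
  obtain ⟨u, v, hu, hv, huvA, huv⟩ :=
    Int.exists_add_eq_mul_eq_of_sq_eq_sq_add hAodd hzodd (by positivity) (by positivity) hA
  obtain ⟨e, f, he, hf, hfodd, hefA, hef⟩ : ∃ e f, 0 < e ∧ 0 < f ∧ Odd f ∧
      e + f = x ^ 2 + 16 * c ^ 2 ∧ e * f = 44 * c ^ 4 := by
    have hparity := Int.odd_add.mp (huvA ▸ hAodd)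
    rcases Int.even_or_odd v with hveven | hvodd
    · exact ⟨v, u, hv, hu, hparity.mpr hveven, by rw [add_comm, huvA], by rw [mul_comm, huv]⟩
    · exact ⟨u, v, hu, hv, hvodd, huvA, huv⟩
  obtain ⟨w, rfl⟩ : (4 : ℤ) ∣ e := by
    have h2f : IsCoprime (2 : ℤ) f := Int.prime_two.coprime_iff_not_dvd.mpr
      (Int.not_even_iff_odd.mpr hfodd ∘ even_iff_two_dvd.mpr)
    exact (h2f.pow_left (m := 2)).dvd_of_dvd_mul_right ⟨11 * c ^ 4, by rw [hef]; ring⟩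
  have hw : 0 < w := by linarith
  have hwf : w * f = 11 * c ^ 4 := mul_left_cancel₀ four_ne_zero (by linear_combination hef)
  have h11 : Prime (11 : ℤ) := by norm_num
  have hAc : IsCoprime (x ^ 2 + 16 * c ^ 2) c := by
    rw [sq c, ← mul_assoc]
    exact (hxy.of_isCoprime_of_dvd_right ⟨2, by ring⟩).pow_left.add_mul_right_left _
  have hwf_cop : IsCoprime w f :=
    Int.isCoprime_of_mul_eq_squarefree_mul_pow (s := 4) h11.squarefree hwf (hefA ▸ hAc)
  obtain ⟨p, q, hp, hq, rfl, ⟨rfl, rfl⟩ | ⟨rfl, rfl⟩⟩ :=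
    Int.exists_eq_prime_mul_pow_of_mul_eq four_ne_zero h11 hw hf hc hwf_cop hwf
  · refine ⟨hxodd, p, q, hp, hq, (Int.odd_pow' four_ne_zero).mp hfodd,
      (IsCoprime.pow_iff four_pos four_pos).mp hwf_cop.of_mul_left_right, by ring, ?_⟩
    linear_combination -hefA
  · have hqodd : Odd q := (Int.odd_pow' four_ne_zero).mp (Int.odd_mul.mp hfodd).2
    exact absurd (by linear_combination -hefA)
      (sq_add_sixteen_mul_ne_of_odd (x := x) (p := p) hqodd)

theorem exists_quartic_eq_sq_of_sq_add_sixteen_eq {x p q : ℤ} (hx : Odd x) (hp : 0 < p)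
    (hq : Odd q) (hpq : IsCoprime p q) (h : x ^ 2 + 16 * p ^ 2 * q ^ 2 = 44 * p ^ 4 + q ^ 4) :
    ∃ a b, 0 < a ∧ 0 < b ∧ a * b = p ∧ a ^ 4 + 8 * a ^ 2 * b ^ 2 + 5 * b ^ 4 = q ^ 2 := by
  have hB : |q ^ 2 - 8 * p ^ 2| ^ 2 = x ^ 2 + 4 * (5 * p ^ 4) := by
    rw [sq_abs]; linear_combination -h
  have hBodd : Odd |q ^ 2 - 8 * p ^ 2| := odd_abs.mpr (hq.pow.sub_even ⟨4 * p ^ 2, by ring⟩)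
  have hB0 : 0 < |q ^ 2 - 8 * p ^ 2| :=
    (abs_nonneg _).lt_of_ne fun h0 ↦ by simp [← h0] at hBodd
  obtain ⟨U, V, hU, hV, hUVB, hUV⟩ :=
    Int.exists_add_eq_mul_eq_of_sq_eq_sq_add hBodd hx hB0 (by positivity) hB
  have h5 : Prime (5 : ℤ) := by norm_num
  have hBp : IsCoprime (1 * U + V) p := by
    rw [one_mul, hUVB, IsCoprime.abs_left_iff,
      show q ^ 2 - 8 * p ^ 2 = q ^ 2 + p * (-8 * p) by ring]
    exact hpq.symm.pow_left.add_mul_left_left _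
  have hUV_cop : IsCoprime U V :=
    Int.isCoprime_of_mul_eq_squarefree_mul_pow h5.squarefree hUV hBp
  obtain ⟨a, b, ha, hb, rfl, hS⟩ : ∃ a b, 0 < a ∧ 0 < b ∧ a * b = p ∧
      |q ^ 2 - 8 * p ^ 2| = a ^ 4 + 5 * b ^ 4 := by
    obtain ⟨a, b, ha, hb, hab, ⟨rfl, rfl⟩ | ⟨rfl, rfl⟩⟩ :=
      Int.exists_eq_prime_mul_pow_of_mul_eq four_ne_zero h5 hU hV hp hUV_cop hUV
    · exact ⟨b, a, hb, ha, by rw [mul_comm, hab], by rw [← hUVB]; ring⟩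
    · exact ⟨a, b, ha, hb, hab, hUVB.symm⟩
  refine ⟨a, b, ha, hb, rfl, ?_⟩
  rcases abs_cases (q ^ 2 - 8 * (a * b) ^ 2) with ⟨habs, -⟩ | ⟨habs, -⟩
  · linear_combination -(habs.symm.trans hS)
  · exact absurd (by linear_combination -(habs.symm.trans hS))
      (sq_add_pow_four_add_five_mul_ne_of_odd (a := a) (b := b) hq)

theorem exists_isCoprime_quartic_eq_sq {x y z : ℤ} (hx : 0 < x) (hy : 0 < y)
    (h : x ^ 4 + 8 * x ^ 2 * y ^ 2 + 5 * y ^ 4 = z ^ 2) :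
    ∃ x' y' z', 0 < y' ∧ IsCoprime x' y' ∧ y' ≤ y ∧
      x' ^ 4 + 8 * x' ^ 2 * y' ^ 2 + 5 * y' ^ 4 = z' ^ 2 := by
  obtain ⟨g, x', y', hg, hgcd, rfl, rfl⟩ :=
    Int.exists_gcd_one' (Int.gcd_pos_of_ne_zero_left y hx.ne')
  have hg' : (0 : ℤ) < g := by exact_mod_cast hg
  obtain ⟨z', rfl⟩ : (g : ℤ) ^ 2 ∣ z := (Int.pow_dvd_pow_iff two_ne_zero).mp
    ⟨x' ^ 4 + 8 * x' ^ 2 * y' ^ 2 + 5 * y' ^ 4, by rw [← h]; ring⟩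
  have hy' : 0 < y' := pos_of_mul_pos_left hy hg'.le
  refine ⟨x', y', z', hy', Int.isCoprime_iff_gcd_eq_one.mpr hgcd,
    le_mul_of_one_le_right hy'.le (by exact_mod_cast hg), ?_⟩
  exact mul_left_cancel₀ (pow_ne_zero 4 hg'.ne') (by linear_combination h)

theorem exists_quartic_eq_sq_lt {x y z : ℤ} (hx : 0 < x) (hy : 0 < y)
    (h : x ^ 4 + 8 * x ^ 2 * y ^ 2 + 5 * y ^ 4 = z ^ 2) :
    ∃ X Y Z, 0 < X ∧ 0 < Y ∧ Y < y ∧ X ^ 4 + 8 * X ^ 2 * Y ^ 2 + 5 * Y ^ 4 = Z ^ 2 := by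
  obtain ⟨x', y', z', hy', hco, hle, h'⟩ := exists_isCoprime_quartic_eq_sq hx hy h
  obtain ⟨hx', p, q, hp, hq, hqodd, hpq, rfl, hpq'⟩ :=
    exists_sq_add_sixteen_eq_of_quartic_eq_sq hy' hco h'
  obtain ⟨a, b, ha, hb, rfl, hab⟩ :=
    exists_quartic_eq_sq_of_sq_add_sixteen_eq hx' hp hqodd hpq hpq'
  exact ⟨a, b, q, ha, hb, by nlinarith [mul_pos ha hq], hab⟩

theorem stmt5 :
    ¬ ∃ x y z : ℤ, 0 < x ∧ 0 < y ∧ 0 < z ∧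
      x ^ 4 + 8 * x ^ 2 * y ^ 2 + 5 * y ^ 4 = z ^ 2 := by
  rintro ⟨x, y, z, hx, hy, -, h⟩
  induction hn : y.toNat using Nat.strong_induction_on generalizing x y z with
  | _ n ih =>
    obtain ⟨X, Y, Z, hX, hY, hYy, hXYZ⟩ := exists_quartic_eq_sq_lt hx hy h
    exact ih Y.toNat (by omega) X Y Z hX hY hXYZ rfl
end

section
/- Let ℓ be a positive integer and let x, y, z be positive integers with x² + ℓ·y² = z² and gcd(x, y) = 1. Then there exist positive integers d, k, λ, ρ₁, ρ₂ with gcd(k, λ) = 1, ρ₁·ρ₂ = ℓ, d ∈ {1, 2}, ρ₁k² > ρ₂λ², such that x = d(ρ₁k² − ρ₂λ²)/2, y = dkλ, and z = d(ρ₁k² + ρ₂λ²)/2. -/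
private lemma gcd4 (A B C D : ℕ) (h : A ∣ D) :
    Nat.gcd (Nat.gcd A B) (Nat.gcd C D) = Nat.gcd A (Nat.gcd B C) := by
  apply Nat.dvd_antisymm
  · exact Nat.dvd_gcd ((Nat.gcd_dvd_left _ _).trans (Nat.gcd_dvd_left A B))
      (Nat.dvd_gcd ((Nat.gcd_dvd_left _ _).trans (Nat.gcd_dvd_right A B))
        ((Nat.gcd_dvd_right _ _).trans (Nat.gcd_dvd_left C D)))
  · exact Nat.dvd_gcd
      (Nat.dvd_gcd (Nat.gcd_dvd_left _ _)
        ((Nat.gcd_dvd_right _ _).trans (Nat.gcd_dvd_left B C)))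
      (Nat.dvd_gcd ((Nat.gcd_dvd_right _ _).trans (Nat.gcd_dvd_right B C))
        ((Nat.gcd_dvd_left _ _).trans h))

/-- If `A * B = ℓ * y ^ 2` then `gcd y A ∣ (A / gcd y A) * gcd y (gcd B A)`. -/
private lemma sq_dvd_aux (ℓ y A B : ℕ) (hy : 0 < y) (hAB : A * B = ℓ * y ^ 2) :
    (Nat.gcd y A) ∣ (A / Nat.gcd y A) * Nat.gcd y (Nat.gcd B A) := by
  set g := Nat.gcd y A with hg'
  have hg : 0 < g := Nat.gcd_pos_of_pos_left _ hy
  obtain ⟨A', hA'⟩ : g ∣ A := Nat.gcd_dvd_right y A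
  obtain ⟨y', hy'⟩ : g ∣ y := Nat.gcd_dvd_left y A
  have hA'eq : A / g = A' := by rw [hA', Nat.mul_div_cancel_left _ hg]
  have hdvd1 : g ∣ A' * B := by
    have h : g * (A' * B) = g * (g * (ℓ * y' ^ 2)) := by
      calc g * (A' * B) = A * B := by rw [hA']; ring
        _ = ℓ * y ^ 2 := hAB
        _ = g * (g * (ℓ * y' ^ 2)) := by rw [hy']; try ring
    exact ⟨ℓ * y' ^ 2, Nat.eq_of_mul_eq_mul_left hg h⟩
  have hdvd2 : g ∣ A' * Nat.gcd g B := by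
    have h1 : g ∣ A' * g := dvd_mul_left g A'
    have h2 : Nat.gcd (A' * g) (A' * B) = A' * Nat.gcd g B := Nat.gcd_mul_left A' g B
    exact h2 ▸ Nat.dvd_gcd h1 hdvd1
  have hcd : Nat.gcd g B ∣ Nat.gcd y (Nat.gcd B A) :=
    Nat.dvd_gcd ((Nat.gcd_dvd_left g B).trans (Nat.gcd_dvd_left y A))
      (Nat.dvd_gcd (Nat.gcd_dvd_right g B)
        ((Nat.gcd_dvd_left g B).trans (Nat.gcd_dvd_right y A)))
  rw [hA'eq]
  exact hdvd2.trans (mul_dvd_mul_left A' hcd)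

theorem stmt10 (ℓ x y z : ℕ) (hℓ : 0 < ℓ) (hx : 0 < x) (hy : 0 < y) (hz : 0 < z)
    (heq : x ^ 2 + ℓ * y ^ 2 = z ^ 2) (hgcd : Nat.gcd x y = 1) :
    ∃ d k l ρ₁ ρ₂ : ℕ, 0 < d ∧ 0 < k ∧ 0 < l ∧ 0 < ρ₁ ∧ 0 < ρ₂ ∧
      Nat.gcd k l = 1 ∧ ρ₁ * ρ₂ = ℓ ∧ (d = 1 ∨ d = 2) ∧
      ρ₂ * l ^ 2 < ρ₁ * k ^ 2 ∧
      2 * x = d * (ρ₁ * k ^ 2 - ρ₂ * l ^ 2) ∧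
      y = d * k * l ∧
      2 * z = d * (ρ₁ * k ^ 2 + ρ₂ * l ^ 2) := by
  have hxz : x < z := by
    have h2 : x ^ 2 < z ^ 2 := by nlinarith [Nat.mul_pos hℓ (Nat.mul_pos hy hy)]
    exact lt_of_pow_lt_pow_left₀ 2 (Nat.zero_le z) h2
  set a := z - x with ha
  set b := z + x with hb
  have hza : z = x + a := by omega
  have hba : b = a + 2 * x := by omega
  have hab : a * b = ℓ * y ^ 2 := by nlinarith [heq, hza, hba]
  have hba' : b * a = ℓ * y ^ 2 := by rw [mul_comm]; exact hab
  have ha0 : 0 < a := by omega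
  have hb0 : 0 < b := by omega
  set u := Nat.gcd y a with hu
  set w := Nat.gcd y b with hw
  set d := Nat.gcd u w with hd
  have hu0 : 0 < u := Nat.gcd_pos_of_pos_left _ hy
  have hw0 : 0 < w := Nat.gcd_pos_of_pos_left _ hy
  have hd0 : 0 < d := Nat.gcd_pos_of_pos_left _ hu0
  have hdy : d ∣ y := (Nat.gcd_dvd_left u w).trans (Nat.gcd_dvd_left y a)
  have hda : d ∣ a := (Nat.gcd_dvd_left u w).trans (Nat.gcd_dvd_right y a)
  have hdb : d ∣ b := (Nat.gcd_dvd_right u w).trans (Nat.gcd_dvd_right y b)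
  have hd2 : Nat.gcd y (Nat.gcd b a) = d := by
    apply Nat.dvd_antisymm
    · have h1 : Nat.gcd y (Nat.gcd b a) ∣ y := Nat.gcd_dvd_left _ _
      have h2 : Nat.gcd y (Nat.gcd b a) ∣ b :=
        (Nat.gcd_dvd_right _ _).trans (Nat.gcd_dvd_left b a)
      have h3 : Nat.gcd y (Nat.gcd b a) ∣ a :=
        (Nat.gcd_dvd_right _ _).trans (Nat.gcd_dvd_right b a)
      exact Nat.dvd_gcd (Nat.dvd_gcd h1 h3) (Nat.dvd_gcd h1 h2)
    · exact Nat.dvd_gcd hdy (Nat.dvd_gcd hdb hda)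
  have hd2' : Nat.gcd y (Nat.gcd a b) = d := by rw [Nat.gcd_comm a b]; exact hd2
  -- key identity u * w = y * d
  have key : u * w = y * d := by
    calc u * w = Nat.gcd (y * w) (a * w) := (Nat.gcd_mul_right y w a).symm
      _ = Nat.gcd (Nat.gcd (y * y) (y * b)) (Nat.gcd (a * y) (a * b)) := by
            rw [Nat.gcd_mul_left y y b, Nat.gcd_mul_left a y b]
      _ = Nat.gcd (Nat.gcd (y * y) (y * b)) (Nat.gcd (a * y) (ℓ * y ^ 2)) := by rw [hab]
      _ = Nat.gcd (y * y) (Nat.gcd (y * b) (a * y)) :=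
            gcd4 (y * y) (y * b) (a * y) (ℓ * y ^ 2) ⟨ℓ, by ring⟩
      _ = Nat.gcd (y * y) (Nat.gcd (y * b) (y * a)) := by rw [mul_comm a y]
      _ = Nat.gcd (y * y) (y * Nat.gcd b a) := by rw [Nat.gcd_mul_left y b a]
      _ = y * Nat.gcd y (Nat.gcd b a) := Nat.gcd_mul_left y y (Nat.gcd b a)
      _ = y * d := by rw [hd2]
  -- d = 1 or 2
  have hd12 : d = 1 ∨ d = 2 := by
    have hdx : d ∣ 2 * x := by
      have hsub : b - a = 2 * x := by omega
      exact hsub ▸ Nat.dvd_sub hdb hda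
    have hcop : Nat.Coprime d x :=
      Nat.Coprime.coprime_dvd_left hdy (Nat.coprime_comm.mp hgcd)
    have hdd : d ∣ 2 := Nat.Coprime.dvd_of_dvd_mul_right hcop hdx
    have hle : d ≤ 2 := Nat.le_of_dvd (by norm_num) hdd
    interval_cases d <;> omega
  -- square divisibilities
  have hu2 : u ∣ (a / u) * d := by
    have := sq_dvd_aux ℓ y a b hy hab
    rwa [hd2] at this
  have hw2 : w ∣ (b / w) * d := by
    have := sq_dvd_aux ℓ y b a hy hba'
    rwa [hd2'] at this
  -- extract the parameters
  obtain ⟨l, hl⟩ : d ∣ u := Nat.gcd_dvd_left u w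
  obtain ⟨k, hk⟩ : d ∣ w := Nat.gcd_dvd_right u w
  obtain ⟨a', ha'⟩ : u ∣ a := Nat.gcd_dvd_right y a
  obtain ⟨b', hb'⟩ : w ∣ b := Nat.gcd_dvd_right y b
  have ha'eq : a / u = a' := by rw [ha', Nat.mul_div_cancel_left _ hu0]
  have hb'eq : b / w = b' := by rw [hb', Nat.mul_div_cancel_left _ hw0]
  rw [ha'eq] at hu2
  rw [hb'eq] at hw2
  obtain ⟨ρ₂, hρ₂⟩ := hu2   -- a' * d = u * ρ₂
  obtain ⟨ρ₁, hρ₁⟩ := hw2   -- b' * d = w * ρ₁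
  have hA : a = d * (ρ₂ * l ^ 2) := by
    refine Nat.eq_of_mul_eq_mul_right hd0 ?_
    calc a * d = u * (a' * d) := by rw [ha']; ring
      _ = u * (u * ρ₂) := by rw [hρ₂]
      _ = (d * l) * ((d * l) * ρ₂) := by rw [hl]
      _ = d * (ρ₂ * l ^ 2) * d := by ring
  have hB : b = d * (ρ₁ * k ^ 2) := by
    refine Nat.eq_of_mul_eq_mul_right hd0 ?_
    calc b * d = w * (b' * d) := by rw [hb']; ring
      _ = w * (w * ρ₁) := by rw [hρ₁]
      _ = (d * k) * ((d * k) * ρ₁) := by rw [hk]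
      _ = d * (ρ₁ * k ^ 2) * d := by ring
  have hyeq : y = d * k * l := by
    refine Nat.eq_of_mul_eq_mul_right hd0 ?_
    calc y * d = u * w := key.symm
      _ = (d * l) * (d * k) := by rw [hl, hk]
      _ = d * k * l * d := by ring
  have hl0 : 0 < l := by
    rcases Nat.eq_zero_or_pos l with h | h
    · subst h; simp at hl; omega
    · exact h
  have hk0 : 0 < k := by
    rcases Nat.eq_zero_or_pos k with h | h
    · subst h; simp at hk; omega
    · exact h
  have hρ₂0 : 0 < ρ₂ := by
    rcases Nat.eq_zero_or_pos ρ₂ with h | h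
    · subst h; simp at hA; omega
    · exact h
  have hρ₁0 : 0 < ρ₁ := by
    rcases Nat.eq_zero_or_pos ρ₁ with h | h
    · subst h; simp at hB; omega
    · exact h
  have hcop : Nat.gcd k l = 1 := by
    have h1 := Nat.coprime_div_gcd_div_gcd (m := u) (n := w) hd0
    have h2 : u / d = l := by rw [hl, Nat.mul_div_cancel_left _ hd0]
    have h3 : w / d = k := by rw [hk, Nat.mul_div_cancel_left _ hd0]
    rw [← hd, h2, h3] at h1
    exact Nat.coprime_comm.mp h1
  have hρρ : ρ₁ * ρ₂ = ℓ := by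
    refine (Nat.eq_of_mul_eq_mul_right (pow_pos hy 2) ?_).symm
    calc ℓ * y ^ 2 = a * b := hab.symm
      _ = (d * (ρ₂ * l ^ 2)) * (d * (ρ₁ * k ^ 2)) := by rw [hA, hB]
      _ = ρ₁ * ρ₂ * (d * k * l) ^ 2 := by ring
      _ = ρ₁ * ρ₂ * y ^ 2 := by rw [hyeq]
  have hlt : ρ₂ * l ^ 2 < ρ₁ * k ^ 2 := by
    have hab' : a < b := by omega
    rw [hA, hB] at hab'
    exact Nat.lt_of_mul_lt_mul_left hab'
  obtain ⟨r, hr⟩ := Nat.le.dest hlt.le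
  have hrsub : ρ₁ * k ^ 2 - ρ₂ * l ^ 2 = r := by rw [← hr, Nat.add_sub_cancel_left]
  have hdist : d * (ρ₁ * k ^ 2) = d * (ρ₂ * l ^ 2) + d * r := by rw [← hr]; ring
  have hdist2 : d * (ρ₁ * k ^ 2 + ρ₂ * l ^ 2) = d * (ρ₁ * k ^ 2) + d * (ρ₂ * l ^ 2) := by
    ring
  refine ⟨d, k, l, ρ₁, ρ₂, hd0, hk0, hl0, hρ₁0, hρ₂0, hcop, hρρ, hd12, hlt, ?_, hyeq, ?_⟩
  · rw [hrsub]
    have h1 : b = a + 2 * x := hba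
    rw [hA, hB] at h1
    linarith [hdist]
  · have h1 : a + b = 2 * z := by omega
    rw [hA, hB] at h1
    linarith [hdist2]
end

section
/- Let p be an odd prime, n an integer, and let x₀, y₀, z₀ be positive integers with gcd(x₀, y₀) = 1, x₀ and z₀ odd, y₀ even, satisfying (x₀² + ny₀²)² − z₀² = p·y₀⁴. Then gcd(x₀² + ny₀², z₀) = 1. -/
/-!
Any common divisor `d` of `A = x₀² + n y₀²` and `z₀` has `d²` dividing `A² - z₀² = p y₀⁴`.
Since `x₀` and `y₀` are coprime, so are `A` and `y₀`, hence `d` and `y₀`; thus `d²` divides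
the squarefree `p`, and `d` is a unit.
-/

theorem IsCoprime.sq_add_mul_sq_left {R : Type*} [CommRing R] {x y : R} (h : IsCoprime x y)
    (n : R) : IsCoprime (x ^ 2 + n * y ^ 2) y := by
  rw [show x ^ 2 + n * y ^ 2 = x ^ 2 + y * (n * y) by ring]
  exact h.pow_left.add_mul_left_left _

theorem isRelPrime_of_sq_sub_sq_eq_mul_pow {R : Type*} [CommRing R] {a y z p : R} {k : ℕ}
    (hp : Squarefree p) (hay : IsCoprime a y) (h : a ^ 2 - z ^ 2 = p * y ^ k) :
    IsRelPrime a z := by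
  intro d hda hdz
  have hdy : IsCoprime d y := hay.of_isCoprime_of_dvd_left hda
  have hdd : d * d ∣ p * y ^ k := by
    rw [← h, sq, sq]
    exact dvd_sub (mul_dvd_mul hda hda) (mul_dvd_mul hdz hdz)
  exact hp d ((hdy.mul_left hdy).pow_right.dvd_of_dvd_mul_right hdd)

theorem stmt14_general (p n x₀ y₀ z₀ : ℤ) (hp : Prime p)
    (hgcd : IsCoprime x₀ y₀)
    (heq : (x₀ ^ 2 + n * y₀ ^ 2) ^ 2 - z₀ ^ 2 = p * y₀ ^ 4) :
    IsCoprime (x₀ ^ 2 + n * y₀ ^ 2) z₀ :=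
  (isRelPrime_of_sq_sub_sq_eq_mul_pow hp.squarefree (hgcd.sq_add_mul_sq_left n) heq).isCoprime

theorem stmt14 (p n x₀ y₀ z₀ : ℤ) (hp : Prime p) (hpodd : Odd p)
    (hx : 0 < x₀) (hy : 0 < y₀) (hz : 0 < z₀)
    (hgcd : IsCoprime x₀ y₀) (hxodd : Odd x₀) (hzodd : Odd z₀) (hyeven : Even y₀)
    (heq : (x₀ ^ 2 + n * y₀ ^ 2) ^ 2 - z₀ ^ 2 = p * y₀ ^ 4) :
    IsCoprime (x₀ ^ 2 + n * y₀ ^ 2) z₀ :=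
  stmt14_general p n x₀ y₀ z₀ hp hgcd heq
end

section
/- Let n be even and p ≡ 3 (mod 4) a prime with n² > p, and let ρ₁, ρ₂ be positive integers with ρ₁ρ₂ = n² − p and {ρ₁, ρ₂} = {n² − p, 1}. Then there are no integers k₁, λ₁, y₂ with y₂ odd satisfying y₂² = −ρ₁k₁⁴ + 2n·k₁²λ₁² − ρ₂λ₁⁴. -/
theorem stmt17 (n p ρ₁ ρ₂ : ℤ) (hne : Even n) (hp : Prime p) (hp4 : p % 4 = 3)
    (hgt : p < n ^ 2) (hρ₁ : 0 < ρ₁) (hρ₂ : 0 < ρ₂) (hρ : ρ₁ * ρ₂ = n ^ 2 - p)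
    (hcases : (ρ₁ = n ^ 2 - p ∧ ρ₂ = 1) ∨ (ρ₁ = 1 ∧ ρ₂ = n ^ 2 - p)) :
    ¬ ∃ k₁ l₁ y₂ : ℤ, Odd y₂ ∧
      y₂ ^ 2 = -ρ₁ * k₁ ^ 4 + 2 * n * k₁ ^ 2 * l₁ ^ 2 - ρ₂ * l₁ ^ 4 := by
  rintro ⟨k, l, y, ⟨m, hm⟩, heq⟩
  obtain ⟨c, hc⟩ := hne
  have hp' : p = 4 * (p / 4) + 3 := by omega
  -- reduce everything mod 4
  have h4 : ((y : ZMod 4)) ^ 2 =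
      -(ρ₁ : ZMod 4) * (k : ZMod 4) ^ 4 + 2 * (n : ZMod 4) * (k : ZMod 4) ^ 2 * (l : ZMod 4) ^ 2
        - (ρ₂ : ZMod 4) * (l : ZMod 4) ^ 4 := by
    exact_mod_cast congrArg (fun z : ℤ => (z : ZMod 4)) heq
  have hy : (y : ZMod 4) = 2 * (m : ZMod 4) + 1 := by exact_mod_cast congrArg _ hm
  have hn : (n : ZMod 4) = 2 * (c : ZMod 4) := by
    have : (n : ZMod 4) = (c : ZMod 4) + (c : ZMod 4) := by exact_mod_cast congrArg _ hc
    rw [this]; ring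
  have hpz : (p : ZMod 4) = 3 := by
    have : (p : ZMod 4) = 4 * ((p / 4 : ℤ) : ZMod 4) + 3 := by exact_mod_cast congrArg _ hp'
    rw [this, show (4 : ZMod 4) = 0 from by decide]
    ring
  rcases hcases with ⟨h1, h2⟩ | ⟨h1, h2⟩ <;>
  · subst h1 h2
    push_cast at h4
    rw [hy, hn, hpz] at h4
    revert h4
    generalize (m : ZMod 4) = M
    generalize (c : ZMod 4) = C
    generalize (k : ZMod 4) = K
    generalize (l : ZMod 4) = L
    revert M C K L
    decide
end

section
/- Let n be even, p ≡ 3 (mod 4) a prime with p > n². Then there are no integers k₁, λ₁, y₂ with y₂ odd satisfying y₂² = (p − n²)·k₁⁴ + 2n·k₁²λ₁² − λ₁⁴. -/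
theorem stmt18 (n p : ℤ) (hne : Even n) (hp : Prime p) (hp4 : p % 4 = 3)
    (hgt : n ^ 2 < p) :
    ¬ ∃ k₁ l₁ y₂ : ℤ, Odd y₂ ∧
      y₂ ^ 2 = (p - n ^ 2) * k₁ ^ 4 + 2 * n * k₁ ^ 2 * l₁ ^ 2 - l₁ ^ 4 := by
  rintro ⟨k, l, y, ⟨m, hm⟩, heq⟩
  obtain ⟨a, ha⟩ := hne
  have hp' : ((p : ℤ) : ZMod 4) = ((3 : ℤ) : ZMod 4) := by
    rw [ZMod.intCast_eq_intCast_iff]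
    show p % 4 = 3 % 4
    omega
  have h4 := congrArg (Int.cast : ℤ → ZMod 4) heq
  push_cast [hm, ha] at h4
  rw [hp'] at h4
  push_cast at h4
  generalize (m : ZMod 4) = M at h4
  generalize (a : ZMod 4) = A at h4
  generalize (k : ZMod 4) = K at h4
  generalize (l : ZMod 4) = L at h4
  revert h4
  revert M A K L
  decide
end
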